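/- The map φ proceeds from right to left through the initial Lyndon word, successively turning the unmatched 1's into 0's: if w is a Lyndon binary word of length n with strictly more 1's than 0's and unmatched positions p_1 < … < p_m, then for every 1 ≤ t ≤ m such that w_{t−1} still has strictly more 1's than 0's, φ(necklace of w_{t−1}) = necklace of w_t. -/

import Mathlib

/-!
Common definitions: binary words of length `n`, rotations, necklaces (the quotient
poset `Bₙ/Cₙ`), the cyclic matching procedure, Lyndon words, the map `φ`,
crossing pairs, and the words `w_t`.

Throughout, a binary word of length `n` is a function `Fin n → Bool`, where `true`
encodes the letter `1` and `false` the letter `0`.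
-/

/-- A binary word of length `n`: `true` encodes the letter `1`, `false` the letter `0`. -/
abbrev Word (n : ℕ) := Fin n → Bool

variable {n : ℕ} [NeZero n]

/-- The rotation `σ_i`, shifting the letters of `w` cyclically by `i` positions (so the
letter at position `j` of `w` appears at position `j + i` of `rot i w`). -/
def rot (i : Fin n) (w : Word n) : Word n := fun j => w (j - i)

lemma rot_rot (i j : Fin n) (w : Word n) : rot i (rot j w) = rot (j + i) w := by
  funext k
  simp [rot, sub_sub, add_comm]

/-- Two words are equivalent when one is a cyclic rotation of the other. -/
def rotSetoid (n : ℕ) [NeZero n] : Setoid (Word n) where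
  r w w' := ∃ i : Fin n, rot i w = w'
  iseqv := by
    refine ⟨fun w => ⟨0, ?_⟩, ?_, ?_⟩
    · funext j; simp [rot]
    · rintro w w' ⟨i, rfl⟩
      refine ⟨-i, ?_⟩
      rw [rot_rot]
      funext j; simp [rot]
    · rintro w w' w'' ⟨i, rfl⟩ ⟨j, rfl⟩
      exact ⟨i + j, (rot_rot j i w).symm⟩

/-- A necklace: an equivalence class of binary words under cyclic rotation. -/
abbrev Necklace (n : ℕ) [NeZero n] := Quotient (rotSetoid n)

/-- The necklace of a word. -/
def nec (w : Word n) : Necklace n := Quotient.mk (rotSetoid n) w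

/-- The number of `1`s in a word. -/
def wt (w : Word n) : ℕ := (Finset.univ.filter fun i => w i = true).card

/-- The number of `0`s in a word. -/
def zeros (w : Word n) : ℕ := (Finset.univ.filter fun i => w i = false).card

/-- The rank of a necklace: the number of `1`s in any representative. -/
noncomputable def rank (u : Necklace n) : ℕ := wt (Quotient.out u)

/-- The set of positions belonging to some pair of `M`. -/
def matchedPos (M : Finset (Fin n × Fin n)) : Finset (Fin n) :=
  M.image Prod.fst ∪ M.image Prod.snd

/-- `j` is the first position outside `S` encountered strictly after `i` in the cyclic
order `i+1, i+2, …` (indices mod `n`). -/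
def FirstAfter (S : Finset (Fin n)) (i j : Fin n) : Prop :=
  j ∉ S ∧ j ≠ i ∧ ∀ k : Fin n, k ∉ S → k ≠ i → (j - i).val ≤ (k - i).val

/-- One step of the cyclic matching procedure on the word `w`: choose an as-yet-unmatched
position `i` carrying the letter `0` such that the first as-yet-unmatched position `j`
after `i` in cyclic order carries the letter `1`, and declare `{i, j}` a matched pair
(recorded as the ordered pair `(i, j)`, the `0`-position first). -/
inductive MatchStep (w : Word n) :
    Finset (Fin n × Fin n) → Finset (Fin n × Fin n) → Prop
  | step {M : Finset (Fin n × Fin n)} {i j : Fin n}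
      (hi : i ∉ matchedPos M) (hw : w i = false)
      (hj : FirstAfter (matchedPos M) i j) (hj1 : w j = true) :
      MatchStep w M (insert (i, j) M)

/-- A maximal execution of the cyclic matching procedure on `w`, starting from the empty
matching: `M` is reachable from `∅` by matching steps and no further step is possible. -/
def IsMaximalMatching (w : Word n) (M : Finset (Fin n × Fin n)) : Prop :=
  Relation.ReflTransGen (MatchStep w) ∅ M ∧ ∀ M', ¬ MatchStep w M M'

/-- The cyclic matching of `w`: the set of matched pairs produced by (any) maximal
execution of the cyclic matching procedure. -/
noncomputable def matching (w : Word n) : Finset (Fin n × Fin n) :=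
  letI := Classical.dec (∃ M, IsMaximalMatching w M)
  if h : ∃ M, IsMaximalMatching w M then h.choose else ∅

/-- The unmatched positions of `w`: positions belonging to no matched pair. -/
noncomputable def unmatchedPos (w : Word n) : Finset (Fin n) :=
  Finset.univ \ matchedPos (matching w)

/-- Lexicographic comparison of words with respect to the letter order `1 ≺ 0`
(recall `true` encodes `1` and `false` encodes `0`). -/
def lexLE (w w' : Word n) : Prop :=
  w = w' ∨ ∃ i : Fin n, (∀ j : Fin n, j < i → w j = w' j) ∧ w i = true ∧ w' i = false

/-- A word is Lyndon if it is lexicographically smallest among all of its rotations,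
with respect to the letter order `1 ≺ 0`. -/
def IsLyndon (w : Word n) : Prop := ∀ i : Fin n, lexLE w (rot i w)

/-- The Lyndon rearrangement of `w`: its lexicographically smallest rotation. -/
noncomputable def lyndonOf (w : Word n) : Word n :=
  letI := Classical.dec (∃ i : Fin n, IsLyndon (rot i w))
  if h : ∃ i : Fin n, IsLyndon (rot i w) then rot h.choose w else w

/-- Change the letter at the rightmost unmatched position of `w` to `0`. -/
noncomputable def flipTop (w : Word n) : Word n :=
  if h : (unmatchedPos w).Nonempty then
    Function.update w ((unmatchedPos w).max' h) false
  else w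

/-- The map `φ`: take the Lyndon rearrangement of a representative and change the letter
at its rightmost unmatched position (which carries a `1` on the upper half of ranks)
to `0`. -/
noncomputable def phi (u : Necklace n) : Necklace n :=
  nec (flipTop (lyndonOf (Quotient.out u)))

/-- `x` lies strictly inside the cyclic arc running from `i` (exclusive) to `k`
(exclusive), in the cyclic order of positions. -/
def StrictBtw (i x k : Fin n) : Prop :=
  0 < (x - i).val ∧ (x - i).val < (k - i).val

/-- The pairs `{i, k}` and `{j, l}` cross: exactly one of `j, l` lies strictly inside one
of the two cyclic arcs determined by `i` and `k`. -/
def Crosses (i k j l : Fin n) : Prop := Xor' (StrictBtw i j k) (StrictBtw i l k)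

/-- `wT w t` is the word obtained from `w` by changing the letters at the last `t`
unmatched positions of `w` to `0`; that is, if the unmatched positions of `w` are
`p₁ < … < p_m`, the positions `p_{m-t+1}, …, p_m` are changed to `0`. -/
noncomputable def wT (w : Word n) (t : ℕ) : Word n := fun j =>
  if j ∈ unmatchedPos w ∧ ((unmatchedPos w).filter fun k => j ≤ k).card ≤ t then false
  else w j

/-- The order on necklaces (the poset `Bₙ/Cₙ`): `u ≤ v` iff there are representatives
`w` of `u` and `w'` of `v` such that every position carrying `1` in `w` also carries `1`
in `w'`. -/
def nle (u v : Necklace n) : Prop :=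
  ∃ w w' : Word n, nec w = u ∧ nec w' = v ∧ ∀ i, w i = true → w' i = true

/-- The strict order on necklaces. -/
def nlt (u v : Necklace n) : Prop := nle u v ∧ u ≠ v

/-- `v` covers `u` in `Bₙ/Cₙ`: `u < v` and there is no `z` with `u < z < v`. -/
def ncovBy (u v : Necklace n) : Prop := nlt u v ∧ ∀ z, nlt u z → ¬ nlt z v

/-- A chain top: a necklace `v` in the upper half of ranks (`2·rank v ≥ n`) which is not
the image under `φ` of any necklace in the strict upper half of ranks. -/
def IsChainTop (v : Necklace n) : Prop :=
  n ≤ 2 * rank v ∧ ∀ u : Necklace n, n < 2 * rank u → phi u ≠ v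

/-- The `φ`-string below the chain top `v`: the necklaces of the words `w_t`,
`0 ≤ t ≤ m`, where `w` is the Lyndon representative of `v` and `m = 2·rank v − n`. -/
noncomputable def chainOf (v : Necklace n) : Set (Necklace n) :=
  { u | ∃ t ≤ 2 * rank v - n, u = nec (wT (lyndonOf (Quotient.out v)) t) }

/-!
Since `w` has more `1`s than `0`s, its unmatched positions `p₁ < … < p_m` all carry `1`, and
`m = #1 - #0`. In `w_s` the new `0` at `p_{m-k+1}` gets matched, across the end of the word, with
`p_k` (`k ≤ s`), so the unmatched positions of `w_s` are `p_{s+1}, …, p_{m-s}`. The Lyndon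
rearrangement of `w_s` is a rotation `σ_d`, and because `w` is Lyndon, `σ_d` does not carry
`p_{m-s+1}`, the first letter where `w_s` differs from `w`, past the end of the word. Hence the
rightmost unmatched position of the rearrangement is the image of `p_{m-s}`, and changing it to
`0` gives a rotation of `w_{s+1}`.
-/

set_option linter.unusedSectionVars false

lemma Fin.val_sub_eq_ite (a b : Fin n) :
    (a - b).val = if b ≤ a then a.val - b.val else n + a.val - b.val := by
  split_ifs with h
  · exact Fin.coe_sub_iff_le.2 h
  · exact Fin.coe_sub_iff_lt.2 (not_le.1 h)

lemma Fin.val_sub_eq_val_sub_sub_val_sub (x u i : Fin n) (h : (u - i).val ≤ (x - i).val) :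
    (x - u).val = (x - i).val - (u - i).val := by
  have := x.isLt
  have := u.isLt
  have := i.isLt
  simp only [Fin.val_sub_eq_ite, Fin.le_def] at h ⊢
  split_ifs at h ⊢ <;> omega

lemma Fin.add_le_add_right_of_val_add_lt {a b d : Fin n} (hab : a ≤ b) (hb : b.val + d.val < n) :
    a + d ≤ b + d := by
  rw [Fin.le_def] at hab ⊢
  rw [Fin.val_add_eq_ite, Fin.val_add_eq_ite, if_neg (by omega), if_neg (by omega)]
  omega

lemma rot_zero (w : Word n) : rot 0 w = w := by
  funext j
  simp [rot]

lemma rot_neg_rot (i : Fin n) (w : Word n) : rot (-i) (rot i w) = w := by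
  rw [rot_rot, add_neg_cancel, rot_zero]

lemma rot_add_apply (i : Fin n) (w : Word n) (j : Fin n) : rot i w (j + i) = w j := by
  simp [rot]

lemma nec_rot (i : Fin n) (w : Word n) : nec (rot i w) = nec w :=
  (Quotient.sound (⟨i, rfl⟩ : (rotSetoid n).r w (rot i w))).symm

lemma update_rot (d q : Fin n) (v : Word n) (b : Bool) :
    Function.update (rot d v) (q + d) b = rot d (Function.update v q b) := by
  funext j
  simp only [rot, Function.update_apply, sub_eq_iff_eq_add]

section Lyndon

/-- Reversing the letters turns the order `1 ≺ 0` into the order of `Bool`, so that `lexLE`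
becomes the lexicographic order of `Lex (Fin n → Bool)`. -/
def lexKey (w : Word n) : Lex (Fin n → Bool) := toLex fun i => !w i

lemma lexKey_injective : Function.Injective (lexKey (n := n)) := fun w w' h => by
  funext i
  simpa [lexKey] using congrFun (congrArg ofLex h) i

lemma lexKey_lt_iff {w w' : Word n} :
    lexKey w < lexKey w' ↔ ∃ i, (∀ j < i, w j = w' j) ∧ w i = true ∧ w' i = false := by
  have hnot : ∀ a b : Bool, (!a) < (!b) ↔ a = true ∧ b = false := by decide
  exact exists_congr fun i => and_congr (forall₂_congr fun j _ => Bool.not_inj_iff) (hnot _ _)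

lemma lexLE_iff_lexKey_le {w w' : Word n} : lexLE w w' ↔ lexKey w ≤ lexKey w' := by
  rw [le_iff_eq_or_lt]
  exact or_congr lexKey_injective.eq_iff.symm lexKey_lt_iff.symm

lemma isLyndon_iff {w : Word n} : IsLyndon w ↔ ∀ i, lexKey w ≤ lexKey (rot i w) := by
  simp only [IsLyndon, lexLE_iff_lexKey_le]

lemma exists_isLyndon_rot (w : Word n) : ∃ i : Fin n, IsLyndon (rot i w) := by
  obtain ⟨i, -, hmin⟩ := Finset.exists_min_image Finset.univ (fun i => lexKey (rot i w))
    Finset.univ_nonempty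
  exact ⟨i, isLyndon_iff.2 fun j => by rw [rot_rot]; exact hmin _ (Finset.mem_univ _)⟩

lemma IsLyndon.rot_eq_self {w : Word n} {i : Fin n} (hw : IsLyndon w) (hi : IsLyndon (rot i w)) :
    rot i w = w := by
  refine lexKey_injective (le_antisymm ?_ (isLyndon_iff.1 hw i))
  simpa only [rot_neg_rot] using isLyndon_iff.1 hi (-i)

lemma isLyndon_lyndonOf (w : Word n) : IsLyndon (lyndonOf w) := by
  rw [lyndonOf, dif_pos (exists_isLyndon_rot w)]
  exact (exists_isLyndon_rot w).choose_spec

lemma exists_rot_eq_lyndonOf (w : Word n) : ∃ i : Fin n, rot i w = lyndonOf w := by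
  rw [lyndonOf, dif_pos (exists_isLyndon_rot w)]
  exact ⟨_, rfl⟩

lemma lyndonOf_eq_self {w : Word n} (hw : IsLyndon w) : lyndonOf w = w := by
  obtain ⟨i, hi⟩ := exists_rot_eq_lyndonOf w
  rw [← hi, hw.rot_eq_self (hi ▸ isLyndon_lyndonOf w)]

lemma lyndonOf_rot (i : Fin n) (w : Word n) : lyndonOf (rot i w) = lyndonOf w := by
  obtain ⟨j, hj⟩ := exists_rot_eq_lyndonOf (rot i w)
  obtain ⟨k, hk⟩ := exists_rot_eq_lyndonOf w
  have h : lyndonOf (rot i w) = rot (j + i - k) (lyndonOf w) := by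
    rw [← hj, ← hk, rot_rot, rot_rot]
    congr 1
    abel
  rw [h] at hj ⊢
  exact (isLyndon_lyndonOf w).rot_eq_self (h ▸ isLyndon_lyndonOf _)

lemma lexKey_lt_of_lexLE_of_agree {x y x' y' : Word n} {c : Fin n} (hxy : lexLE x y)
    (hx : ∀ j ≤ c, x' j = x j) (hy : ∀ j < c, y' j = y j) (hyc : y c = true)
    (hyc' : y' c = false) : lexKey x' < lexKey y' := by
  rw [lexKey_lt_iff]
  rcases hxy with rfl | ⟨i, hpre, hxi, hyi⟩
  · exact ⟨c, fun j hj => (hx j hj.le).trans (hy j hj).symm, (hx c le_rfl).trans hyc, hyc'⟩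
  rcases lt_or_ge i c with hic | hci
  · refine ⟨i, fun j hj => ?_, (hx i hic.le).trans hxi, (hy i hic).trans hyi⟩
    rw [hx j (hj.trans hic).le, hy j (hj.trans hic), hpre j hj]
  · have hxc : x c = true := by
      rcases hci.lt_or_eq with h | rfl
      · exact (hpre c h).trans hyc
      · simp [hyc] at hyi
    refine ⟨c, fun j hj => ?_, (hx c le_rfl).trans hxc, hyc'⟩
    rw [hx j hj.le, hy j hj, hpre j (hj.trans_le hci)]

/-- If `p + d` wrapped around to `τ = p + d - n < p`, then `σ_d(v)` would agree with `σ_d(w)`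
before `τ` and carry the new `0` from `p` at `τ`, where `σ_d(w)` has a `1`; since `σ_d(w)` is at
least `w`, which agrees with `v` up to `τ`, this would make `σ_d(v)` larger than `v`. -/
theorem IsLyndon.val_add_le {w v : Word n} (hw : IsLyndon w) {p : Fin n}
    (hagree : ∀ j < p, v j = w j) (hwp : w p = true) (hvp : v p = false) {d : Fin n}
    (hd : IsLyndon (rot d v)) : p.val + d.val ≤ n := by
  by_contra! hwrap
  set τ := p + d
  have hτ : τ.val = p.val + d.val - n := by
    rw [Fin.val_add_eq_ite, if_pos hwrap.le]
  have hτp : τ < p := by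
    rw [Fin.lt_def, hτ]
    omega
  have hτd : τ - d = p := add_sub_cancel_right p d
  have hshift : ∀ j < τ, rot d v j = rot d w j := by
    intro j hj
    have hjd : j < d := by
      rw [Fin.lt_def] at hj ⊢
      omega
    refine hagree _ ?_
    rw [Fin.lt_def, Fin.coe_sub_iff_lt.2 hjd]
    rw [Fin.lt_def, hτ] at hj
    omega
  have hlt : lexKey v < lexKey (rot d v) :=
    lexKey_lt_of_lexLE_of_agree (hw d) (fun j hj => hagree j (hj.trans_lt hτp)) hshift
      (by simp only [rot, hτd, hwp]) (by simp only [rot, hτd, hvp])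
  have hle := isLyndon_iff.1 hd (-d)
  rw [rot_neg_rot] at hle
  exact hle.not_gt hlt

end Lyndon

section Matching

variable {w : Word n}

lemma matchedPos_insert (p : Fin n × Fin n) (M : Finset (Fin n × Fin n)) :
    matchedPos (insert p M) = insert p.1 (insert p.2 (matchedPos M)) := by
  ext x
  simp only [matchedPos, Finset.image_insert, Finset.mem_union, Finset.mem_insert]
  tauto

lemma matchedPos_mono {M M' : Finset (Fin n × Fin n)} (h : M ⊆ M') :
    matchedPos M ⊆ matchedPos M' :=
  Finset.union_subset_union (Finset.image_subset_image h) (Finset.image_subset_image h)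

lemma mem_unmatchedPos {k : Fin n} : k ∈ unmatchedPos w ↔ k ∉ matchedPos (matching w) := by
  simp [unmatchedPos]

lemma FirstAfter.unique {S : Finset (Fin n)} {i j j' : Fin n} (h : FirstAfter S i j)
    (h' : FirstAfter S i j') : j = j' :=
  sub_left_injective (Fin.ext (le_antisymm (h.2.2 j' h'.1 h'.2.1) (h'.2.2 j h.1 h.2.1)))

lemma FirstAfter.mono {S T : Finset (Fin n)} {i j : Fin n} (h : FirstAfter S i j) (hST : S ⊆ T)
    (hj : j ∉ T) : FirstAfter T i j :=
  ⟨hj, h.2.1, fun k hk hki => h.2.2 k (fun hkS => hk (hST hkS)) hki⟩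

/-- Two free positions cannot have the same first free successor: in the cyclic order each
would have to come strictly between the other one and that successor. -/
lemma FirstAfter.inj {S : Finset (Fin n)} {i i' j : Fin n} (h : FirstAfter S i j)
    (h' : FirstAfter S i' j) (hi : i ∉ S) (hi' : i' ∉ S) : i = i' := by
  by_contra hne
  have h1 := h.2.2 i' hi' (Ne.symm hne)
  have h2 := h'.2.2 i hi hne
  have hj1 : (j - i).val ≠ (i' - i).val := fun hc => h'.2.1 (sub_left_injective (Fin.ext hc))
  have hne' : i.val ≠ i'.val := Fin.val_ne_of_ne hne
  have hji : j.val ≠ i.val := Fin.val_ne_of_ne h.2.1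
  have hji' : j.val ≠ i'.val := Fin.val_ne_of_ne h'.2.1
  simp only [Fin.val_sub_eq_ite, Fin.le_def] at h1 h2 hj1
  split_ifs at h1 h2 hj1 <;> omega

lemma firstAfter_sdiff_of_forall_mem {S : Finset (Fin n)} {i j : Fin n} (hj : j ∈ S)
    (hji : j < i) (hS : ∀ k ∈ S, j ≤ k ∧ k ≤ i) : FirstAfter (Finset.univ \ S) i j := by
  refine ⟨by simpa using hj, hji.ne, fun k hk hki => ?_⟩
  have hk' : k ∈ S := by simpa using hk
  have hki' : k < i := lt_of_le_of_ne (hS k hk').2 hki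
  rw [Fin.coe_sub_iff_lt.2 hji, Fin.coe_sub_iff_lt.2 hki']
  have := Fin.le_def.1 (hS k hk').1
  omega

lemma MatchStep.insert_of_ne {M : Finset (Fin n × Fin n)} {i j i' j' : Fin n}
    (hi : i ∉ matchedPos M) (hwi : w i = false) (hj : FirstAfter (matchedPos M) i j)
    (hwj : w j = true) (hi' : i' ∉ matchedPos M) (hwi' : w i' = false)
    (hj' : FirstAfter (matchedPos M) i' j') (hwj' : w j' = true) (hne : i ≠ i') :
    MatchStep w (insert (i, j) M) (insert (i', j') (insert (i, j) M)) := by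
  have hjj' : j' ≠ j := fun h => hne (hj.inj (h ▸ hj') hi hi')
  have hi'j : i' ≠ j := fun h => by simp [h, hwj] at hwi'
  have hj'i : j' ≠ i := fun h => by simp [h, hwi] at hwj'
  have hsub : matchedPos M ⊆ matchedPos (insert (i, j) M) :=
    matchedPos_mono (Finset.subset_insert _ _)
  refine MatchStep.step ?_ hwi' (hj'.mono hsub ?_) hwj' <;>
    simp only [matchedPos_insert, Finset.mem_insert, not_or]
  exacts [⟨Ne.symm hne, hi'j, hi'⟩, ⟨hj'i, hjj', hj'.1⟩]

lemma MatchStep.diamond {M M₁ M₂ : Finset (Fin n × Fin n)} (h₁ : MatchStep w M M₁)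
    (h₂ : MatchStep w M M₂) :
    ∃ M', Relation.ReflGen (MatchStep w) M₁ M' ∧ Relation.ReflTransGen (MatchStep w) M₂ M' := by
  cases h₁ with | @step i j hi hwi hj hwj =>
  cases h₂ with | @step i' j' hi' hwi' hj' hwj' =>
  by_cases hii' : i = i'
  · subst hii'
    obtain rfl := hj.unique hj'
    exact ⟨_, .refl, .refl⟩
  refine ⟨insert (i', j') (insert (i, j) M), .single ?_, .single ?_⟩
  · exact MatchStep.insert_of_ne hi hwi hj hwj hi' hwi' hj' hwj' hii'
  · rw [Finset.insert_comm]
    exact MatchStep.insert_of_ne hi' hwi' hj' hwj' hi hwi hj hwj (Ne.symm hii')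

lemma IsMaximalMatching.unique {M M' : Finset (Fin n × Fin n)} (h : IsMaximalMatching w M)
    (h' : IsMaximalMatching w M') : M = M' := by
  obtain ⟨M'', hM, hM'⟩ := Relation.church_rosser (fun _ _ _ => MatchStep.diamond) h.1 h'.1
  rw [hM.cases_head.resolve_right fun ⟨_, hs, _⟩ => h.2 _ hs,
    hM'.cases_head.resolve_right fun ⟨_, hs, _⟩ => h'.2 _ hs]

lemma MatchStep.card_lt {M M' : Finset (Fin n × Fin n)} (h : MatchStep w M M') :
    M.card < M'.card := by
  obtain ⟨hi, -, -, -⟩ := h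
  refine Finset.card_lt_card (Finset.ssubset_insert fun hmem => hi ?_)
  exact Finset.mem_union_left _ (Finset.mem_image_of_mem Prod.fst hmem)

lemma exists_isMaximalMatching (w : Word n) : ∃ M, IsMaximalMatching w M := by
  classical
  obtain ⟨M, hM, hmax⟩ := Finset.exists_max_image
    (Finset.univ.filter fun M => Relation.ReflTransGen (MatchStep w) ∅ M) Finset.card
    ⟨∅, Finset.mem_filter.2 ⟨Finset.mem_univ _, .refl⟩⟩
  rw [Finset.mem_filter] at hM
  refine ⟨M, hM.2, fun M' hstep => ?_⟩
  have := hmax M' (Finset.mem_filter.2 ⟨Finset.mem_univ _, hM.2.tail hstep⟩)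
  exact this.not_gt hstep.card_lt

lemma isMaximalMatching_matching (w : Word n) : IsMaximalMatching w (matching w) := by
  rw [matching, dif_pos (exists_isMaximalMatching w)]
  exact (exists_isMaximalMatching w).choose_spec

lemma IsMaximalMatching.matching_eq {M : Finset (Fin n × Fin n)} (h : IsMaximalMatching w M) :
    matching w = M :=
  (isMaximalMatching_matching w).unique h

lemma card_filter_matchedPos {M : Finset (Fin n × Fin n)}
    (h : Relation.ReflTransGen (MatchStep w) ∅ M) (b : Bool) :
    ((matchedPos M).filter (w · = b)).card = M.card := by
  induction h with
  | refl => rfl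
  | tail _ hstep ih =>
    cases hstep with | @step i j hi hwi hj hwj =>
    have hpair : (i, j) ∉ _ := fun hmem =>
      hi (Finset.mem_union_left _ (Finset.mem_image_of_mem Prod.fst hmem))
    rw [matchedPos_insert, Finset.card_insert_of_notMem hpair, ← ih]
    cases b <;> simp [Finset.filter_insert, hwi, hwj, hi, hj.1]

lemma card_filter_unmatchedPos_add (w : Word n) (b : Bool) :
    ((unmatchedPos w).filter (w · = b)).card + (matching w).card =
      (Finset.univ.filter (w · = b)).card := by
  rw [← card_filter_matchedPos (isMaximalMatching_matching w).1 b, add_comm,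
    ← Finset.card_filter_add_card_filter_not (s := Finset.univ.filter (w · = b))
      (· ∈ matchedPos (matching w))]
  congr 2 <;> ext k <;> simp [unmatchedPos, and_comm]

/-- With more `1`s than `0`s some unmatched `1` exists. An unmatched `0` would then be
followed, at minimal cyclic distance, by an unmatched `1`, and the procedure could go on. -/
lemma eq_true_of_mem_unmatchedPos (hmaj : zeros w < wt w) {k : Fin n}
    (hk : k ∈ unmatchedPos w) : w k = true := by
  by_contra hk0
  rw [Bool.not_eq_true] at hk0
  have hone : ((unmatchedPos w).filter (w · = true)).Nonempty := by
    have h1 := card_filter_unmatchedPos_add w true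
    have h0 := card_filter_unmatchedPos_add w false
    rw [← Finset.card_pos]
    simp only [wt, zeros] at hmaj
    omega
  obtain ⟨x, hx⟩ := hone
  rw [Finset.mem_filter] at hx
  set F := (unmatchedPos w ×ˢ unmatchedPos w).filter fun p => w p.1 = false ∧ w p.2 = true
  have hmemF : ∀ {p : Fin n × Fin n}, p ∈ F ↔
      (p.1 ∈ unmatchedPos w ∧ p.2 ∈ unmatchedPos w) ∧ w p.1 = false ∧ w p.2 = true := by
    simp [F]
  obtain ⟨⟨i, j⟩, hp, hmin⟩ :=
    Finset.exists_min_image F (fun p => (p.2 - p.1).val) ⟨(k, x), hmemF.2 ⟨⟨hk, hx.1⟩, hk0, hx.2⟩⟩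
  obtain ⟨⟨hi, hj⟩, hwi, hwj⟩ := hmemF.1 hp
  have hfirst : FirstAfter (matchedPos (matching w)) i j := by
    refine ⟨mem_unmatchedPos.1 hj, fun h => by simp [h, hwi] at hwj, fun u hu hui => ?_⟩
    by_contra! hlt
    have hu0 : (u - i).val ≠ 0 := fun h => hui (sub_eq_zero.1 (Fin.ext h))
    cases hwu : w u
    · have := hmin (u, j) (hmemF.2 ⟨⟨mem_unmatchedPos.2 hu, hj⟩, hwu, hwj⟩)
      dsimp only at this
      rw [Fin.val_sub_eq_val_sub_sub_val_sub j u i hlt.le] at this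
      omega
    · exact (hmin (i, u) (hmemF.2 ⟨⟨hi, mem_unmatchedPos.2 hu⟩, hwi, hwu⟩)).not_gt hlt
  exact (isMaximalMatching_matching w).2 _ (.step (mem_unmatchedPos.1 hi) hwi hfirst hwj)

lemma card_unmatchedPos (hmaj : zeros w < wt w) : (unmatchedPos w).card = wt w - zeros w := by
  have h1 := card_filter_unmatchedPos_add w true
  have h0 := card_filter_unmatchedPos_add w false
  rw [Finset.filter_true_of_mem fun k hk => eq_true_of_mem_unmatchedPos hmaj hk] at h1
  rw [Finset.filter_false_of_mem fun k hk h => by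
    simp [eq_true_of_mem_unmatchedPos hmaj hk] at h] at h0
  simp only [wt, zeros, Finset.card_empty] at h1 h0 ⊢
  omega

lemma reflTransGen_matchStep_of_eqOn {v : Word n} {M : Finset (Fin n × Fin n)}
    (h : Relation.ReflTransGen (MatchStep w) ∅ M) (hvw : ∀ x ∈ matchedPos M, v x = w x) :
    Relation.ReflTransGen (MatchStep v) ∅ M := by
  induction h with
  | refl => exact .refl
  | @tail M₁ _ _ hstep ih =>
    cases hstep with | @step i j hi hwi hj hwj =>
    have hvw' : ∀ x ∈ matchedPos M₁, v x = w x := fun x hx =>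
      hvw x (matchedPos_mono (Finset.subset_insert _ _) hx)
    have hmem : i ∈ matchedPos (insert (i, j) M₁) ∧ j ∈ matchedPos (insert (i, j) M₁) := by
      simp [matchedPos_insert]
    exact (ih hvw').tail (.step hi ((hvw i hmem.1).trans hwi) hj ((hvw j hmem.2).trans hwj))

lemma matchedPos_image_map (M : Finset (Fin n × Fin n)) (c : Fin n) :
    matchedPos (M.image (Prod.map (· + c) (· + c))) = (matchedPos M).image (· + c) := by
  simp only [matchedPos, Finset.image_union, Finset.image_image]
  rfl

lemma FirstAfter.image_add {S : Finset (Fin n)} {i j : Fin n} (h : FirstAfter S i j) (c : Fin n) :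
    FirstAfter (S.image (· + c)) (i + c) (j + c) := by
  refine ⟨fun hj => h.1 ?_, fun hji => h.2.1 (add_right_cancel hji), fun k hk hki => ?_⟩
  · simpa using hj
  · have := h.2.2 (k - c) (fun hkS => hk (Finset.mem_image.2 ⟨_, hkS, sub_add_cancel k c⟩))
      (fun hkc => hki (by rw [← hkc, sub_add_cancel]))
    rwa [add_sub_add_right_eq_sub, show k - (i + c) = k - c - i by abel]

lemma MatchStep.image_add {M M' : Finset (Fin n × Fin n)} (h : MatchStep w M M') (c : Fin n) :
    MatchStep (rot c w) (M.image (Prod.map (· + c) (· + c)))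
      (M'.image (Prod.map (· + c) (· + c))) := by
  cases h with | @step i j hi hwi hj hwj =>
  rw [Finset.image_insert]
  refine .step ?_ (by rwa [rot_add_apply]) ?_ (by rwa [rot_add_apply])
  · rw [matchedPos_image_map]
    simpa using hi
  · rw [matchedPos_image_map]
    exact hj.image_add c

lemma IsMaximalMatching.image_add {M : Finset (Fin n × Fin n)} (h : IsMaximalMatching w M)
    (c : Fin n) : IsMaximalMatching (rot c w) (M.image (Prod.map (· + c) (· + c))) := by
  have hreach : ∀ {v : Word n} {M'} (d : Fin n), Relation.ReflTransGen (MatchStep v) ∅ M' →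
      Relation.ReflTransGen (MatchStep (rot d v)) ∅ (M'.image (Prod.map (· + d) (· + d))) := by
    intro v M' d hM'
    induction hM' with
    | refl => exact .refl
    | tail _ hstep ih => exact ih.tail (hstep.image_add d)
  refine ⟨hreach c h.1, fun M' hstep => h.2 (M'.image (Prod.map (· + -c) (· + -c))) ?_⟩
  have hback := hstep.image_add (-c)
  have hid : (Prod.map (· + -c) (· + -c) ∘ Prod.map (· + c) (· + c) : Fin n × Fin n → _) = id := by
    funext p
    simp [Prod.map]
  rwa [rot_neg_rot, Finset.image_image, hid, Finset.image_id] at hback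

lemma unmatchedPos_rot (c : Fin n) : unmatchedPos (rot c w) = (unmatchedPos w).image (· + c) := by
  rw [unmatchedPos, ((isMaximalMatching_matching w).image_add c).matching_eq,
    matchedPos_image_map]
  ext x
  simp [unmatchedPos]

end Matching

section FlipUnmatched

variable {w : Word n} {s : ℕ}

/-- At `p_k` this is `m - k + 1`, so `wT w t` changes exactly the unmatched positions where it
is at most `t`. -/
noncomputable def rightRank (w : Word n) (j : Fin n) : ℕ :=
  ((unmatchedPos w).filter fun k => j ≤ k).card

lemma wT_apply (w : Word n) (t : ℕ) (j : Fin n) :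
    wT w t j = if j ∈ unmatchedPos w ∧ rightRank w j ≤ t then false else w j := rfl

lemma strictAntiOn_rightRank : StrictAntiOn (rightRank w) (unmatchedPos w : Set (Fin n)) := by
  intro a ha b _ hab
  refine Finset.card_lt_card ((Finset.ssubset_iff_of_subset fun k hk => ?_).2 ⟨a, ?_, ?_⟩)
  · simp only [Finset.mem_filter] at hk ⊢
    exact ⟨hk.1, hab.le.trans hk.2⟩
  · simpa using ha
  · simp [hab]

lemma rightRank_pos {j : Fin n} (hj : j ∈ unmatchedPos w) : 0 < rightRank w j :=
  Finset.card_pos.2 ⟨j, Finset.mem_filter.2 ⟨hj, le_rfl⟩⟩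

lemma rightRank_le_card (j : Fin n) : rightRank w j ≤ (unmatchedPos w).card :=
  Finset.card_filter_le (unmatchedPos w) _

lemma image_rightRank :
    (unmatchedPos w).image (rightRank w) = Finset.Icc 1 (unmatchedPos w).card := by
  refine Finset.eq_of_subset_of_card_le (fun r hr => ?_) ?_
  · obtain ⟨j, hj, rfl⟩ := Finset.mem_image.1 hr
    exact Finset.mem_Icc.2 ⟨rightRank_pos hj, rightRank_le_card j⟩
  · rw [Finset.card_image_of_injOn strictAntiOn_rightRank.injOn, Nat.card_Icc,
      Nat.add_sub_cancel]

lemma exists_rightRank_eq {r : ℕ} (h1 : 1 ≤ r) (hr : r ≤ (unmatchedPos w).card) :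
    ∃ p ∈ unmatchedPos w, rightRank w p = r :=
  Finset.mem_image.1 (image_rightRank (w := w) ▸ Finset.mem_Icc.2 ⟨h1, hr⟩)

lemma card_filter_rightRank_le (hs : s ≤ (unmatchedPos w).card) :
    ((unmatchedPos w).filter (rightRank w · ≤ s)).card = s := by
  rw [← Finset.card_image_of_injOn (strictAntiOn_rightRank.injOn.mono (Finset.filter_subset _ _)),
    ← Finset.filter_image (p := (· ≤ s)), image_rightRank]
  have : (Finset.Icc 1 (unmatchedPos w).card).filter (· ≤ s) = Finset.Icc 1 s := by
    ext r
    simp only [Finset.mem_filter, Finset.mem_Icc]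
    omega
  rw [this, Nat.card_Icc, Nat.add_sub_cancel]

lemma wt_add_zeros (v : Word n) : wt v + zeros v = n := by
  have := Finset.card_filter_add_card_filter_not (s := (Finset.univ : Finset (Fin n))) (v · = true)
  simpa only [wt, zeros, Bool.not_eq_true, Finset.card_univ, Fintype.card_fin] using this

lemma wt_wT (hmaj : zeros w < wt w) (hs : s ≤ (unmatchedPos w).card) :
    wt (wT w s) = wt w - s := by
  have hflip : (unmatchedPos w).filter (rightRank w · ≤ s) ⊆ Finset.univ.filter (w · = true) :=
    fun k hk => by
      simp only [Finset.mem_filter] at hk ⊢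
      exact ⟨Finset.mem_univ _, eq_true_of_mem_unmatchedPos hmaj hk.1⟩
  have hset : Finset.univ.filter (wT w s · = true) =
      Finset.univ.filter (w · = true) \ (unmatchedPos w).filter (rightRank w · ≤ s) := by
    ext k
    simp only [Finset.mem_sdiff, Finset.mem_filter, Finset.mem_univ, true_and]
    rw [wT_apply]
    split_ifs with hk <;> simp [hk]
  rw [wt, wt, hset, Finset.card_sdiff_of_subset hflip, card_filter_rightRank_le hs]

lemma two_mul_lt_card_unmatchedPos (hmaj : zeros w < wt w) (hs : s ≤ (unmatchedPos w).card)
    (hupper : zeros (wT w s) < wt (wT w s)) : 2 * s < (unmatchedPos w).card := by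
  have := wt_add_zeros w
  have := wt_add_zeros (wT w s)
  have := wt_wT hmaj hs
  have := card_unmatchedPos hmaj
  omega

lemma wT_zero (w : Word n) : wT w 0 = w := by
  funext j
  rw [wT_apply, if_neg fun h => (rightRank_pos h.1).ne' (Nat.le_zero.1 h.2)]

lemma wT_succ {q : Fin n} (hq : q ∈ unmatchedPos w) (hqs : rightRank w q = s + 1) :
    wT w (s + 1) = Function.update (wT w s) q false := by
  funext j
  rcases eq_or_ne j q with rfl | hjq
  · rw [Function.update_self, wT_apply, if_pos ⟨hq, hqs.le⟩]
  · rw [Function.update_of_ne hjq, wT_apply, wT_apply]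
    have : j ∈ unmatchedPos w → rightRank w j ≠ s + 1 := fun hj h =>
      hjq (strictAntiOn_rightRank.injOn hj hq (h.trans hqs.symm))
    congr 1
    exact propext ⟨fun h => ⟨h.1, Nat.le_of_lt_succ ((this h.1).lt_of_le h.2)⟩,
      fun h => ⟨h.1, h.2.trans s.le_succ⟩⟩

/-- The unmatched positions `p_{s+1}, …, p_{m-s}`. -/
noncomputable def middleUnmatched (w : Word n) (s : ℕ) : Finset (Fin n) :=
  (unmatchedPos w).filter fun k => s < rightRank w k ∧ rightRank w k + s ≤ (unmatchedPos w).card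

lemma wT_eq_true_of_mem_middleUnmatched (hmaj : zeros w < wt w) {k : Fin n}
    (hk : k ∈ middleUnmatched w s) : wT w s k = true := by
  rw [middleUnmatched, Finset.mem_filter] at hk
  rw [wT_apply, if_neg fun h => h.2.not_gt hk.2.1]
  exact eq_true_of_mem_unmatchedPos hmaj hk.1

lemma le_of_mem_middleUnmatched {q k : Fin n} (hq : q ∈ unmatchedPos w)
    (hqrank : rightRank w q = s + 1) (hk : k ∈ middleUnmatched w s) : k ≤ q := by
  rw [middleUnmatched, Finset.mem_filter] at hk
  exact (strictAntiOn_rightRank.le_iff_ge hq hk.1).1 (hqrank ▸ hk.2.1)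

lemma mem_middleUnmatched_succ {i j k : Fin n} (hi : i ∈ unmatchedPos w)
    (hirank : rightRank w i = s + 1) (hj : j ∈ unmatchedPos w)
    (hjrank : rightRank w j + s = (unmatchedPos w).card) :
    k ∈ middleUnmatched w (s + 1) ↔ k ∈ middleUnmatched w s ∧ k ≠ i ∧ k ≠ j := by
  simp only [middleUnmatched, Finset.mem_filter]
  constructor
  · rintro ⟨hk, hlo, hhi⟩
    refine ⟨⟨hk, by omega, by omega⟩, ?_, ?_⟩ <;> rintro rfl <;> omega
  · rintro ⟨⟨hk, hlo, hhi⟩, hki, hkj⟩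
    have hinj := (strictAntiOn_rightRank (w := w)).injOn
    refine ⟨hk, lt_of_le_of_ne hlo fun h => hki (hinj hk hi (by omega)), ?_⟩
    by_contra! h
    exact hkj (hinj hk hj (by omega))

/-- Passing from `w_s` to `w_{s+1}` turns `p_{m-s}`, the rightmost middle position, into `0`;
its first free successor, across the end of the word, is the leftmost one `p_{s+1}`. -/
lemma exists_reflTransGen_wT (hmaj : zeros w < wt w) (s : ℕ)
    (hs : 2 * s ≤ (unmatchedPos w).card) :
    ∃ M, Relation.ReflTransGen (MatchStep (wT w s)) ∅ M ∧
      matchedPos M = Finset.univ \ middleUnmatched w s := by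
  induction s with
  | zero =>
    refine ⟨matching w, by simpa [wT_zero] using (isMaximalMatching_matching w).1, ?_⟩
    have : middleUnmatched w 0 = unmatchedPos w :=
      Finset.filter_true_of_mem fun k hk => ⟨rightRank_pos hk, rightRank_le_card k⟩
    rw [this, unmatchedPos, Finset.sdiff_sdiff_eq_self (Finset.subset_univ _)]
  | succ s ih =>
    obtain ⟨M, hM, hmatched⟩ := ih (by omega)
    obtain ⟨i, hiU, hirank⟩ := exists_rightRank_eq (w := w) (r := s + 1) (by omega) (by omega)
    obtain ⟨j, hjU, hjrank⟩ :=
      exists_rightRank_eq (w := w) (r := (unmatchedPos w).card - s) (by omega) (by omega)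
    have hmem {k : Fin n} : k ∈ middleUnmatched w s ↔
        k ∈ unmatchedPos w ∧ s < rightRank w k ∧ rightRank w k + s ≤ (unmatchedPos w).card :=
      Finset.mem_filter
    have hiM : i ∈ middleUnmatched w s := hmem.2 ⟨hiU, by omega, by omega⟩
    have hjM : j ∈ middleUnmatched w s := hmem.2 ⟨hjU, by omega, by omega⟩
    have hji : j < i := (strictAntiOn_rightRank.lt_iff_gt hiU hjU).1 (by omega)
    have hbetween : ∀ k ∈ middleUnmatched w s, j ≤ k ∧ k ≤ i := fun k hk =>
      ⟨(strictAntiOn_rightRank.le_iff_ge (hmem.1 hk).1 hjU).1 (by have := hmem.1 hk; omega),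
        le_of_mem_middleUnmatched hiU hirank hk⟩
    have hwT := wT_succ hiU hirank
    refine ⟨insert (i, j) M, (reflTransGen_matchStep_of_eqOn hM fun x hx => ?_).tail
      (.step ?_ ?_ ?_ ?_), ?_⟩
    · rw [hmatched, Finset.mem_sdiff] at hx
      rw [hwT, Function.update_of_ne (by rintro rfl; exact hx.2 hiM)]
    · simp [hmatched, hiM]
    · rw [hwT, Function.update_self]
    · rw [hmatched]
      exact firstAfter_sdiff_of_forall_mem hjM hji hbetween
    · rw [hwT, Function.update_of_ne hji.ne]
      exact wT_eq_true_of_mem_middleUnmatched hmaj hjM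
    · ext x
      rw [matchedPos_insert, hmatched, Finset.mem_sdiff,
        mem_middleUnmatched_succ hiU hirank hjU (by omega)]
      simp only [Finset.mem_insert, Finset.mem_sdiff, Finset.mem_univ, true_and]
      tauto

lemma unmatchedPos_wT (hmaj : zeros w < wt w) (hs : 2 * s ≤ (unmatchedPos w).card) :
    unmatchedPos (wT w s) = middleUnmatched w s := by
  obtain ⟨M, hM, hmatched⟩ := exists_reflTransGen_wT hmaj s hs
  have hmax : IsMaximalMatching (wT w s) M := by
    refine ⟨hM, fun M' hstep => ?_⟩
    cases hstep with | @step i j hi hwi _ _ =>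
    rw [hmatched, Finset.mem_sdiff, not_and, not_not] at hi
    simp [wT_eq_true_of_mem_middleUnmatched hmaj (hi (Finset.mem_univ i))] at hwi
  rw [unmatchedPos, hmax.matching_eq, hmatched, Finset.sdiff_sdiff_eq_self (Finset.subset_univ _)]

end FlipUnmatched

lemma phi_nec (v : Word n) : phi (nec v) = nec (flipTop (lyndonOf v)) := by
  obtain ⟨e, he⟩ := Quotient.exact (Quotient.out_eq (nec v))
  have : lyndonOf (Quotient.out (nec v)) = lyndonOf v := by rw [← lyndonOf_rot e, he]
  rw [phi, this]

lemma flipTop_eq_update {v : Word n} {q : Fin n} (hq : q ∈ unmatchedPos v)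
    (hmax : ∀ k ∈ unmatchedPos v, k ≤ q) : flipTop v = Function.update v q false := by
  rw [flipTop, dif_pos ⟨q, hq⟩]
  congr
  exact (Finset.max'_eq_iff _ _ _).2 ⟨hq, hmax⟩

/-- For `s ≥ 1` the middle unmatched positions lie before `p_{m-s+1}`, the first position where
`w_s` differs from `w`. -/
lemma exists_rot_eq_lyndonOf_wT {w : Word n} {s : ℕ} (hL : IsLyndon w) (hmaj : zeros w < wt w)
    (hs : s ≤ (unmatchedPos w).card) :
    ∃ d : Fin n, rot d (wT w s) = lyndonOf (wT w s) ∧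
      ∀ k ∈ middleUnmatched w s, k.val + d.val < n := by
  rcases Nat.eq_zero_or_pos s with rfl | hs0
  · exact ⟨0, by rw [rot_zero, wT_zero, lyndonOf_eq_self hL], fun k _ => by simp⟩
  obtain ⟨d, hd⟩ := exists_rot_eq_lyndonOf (wT w s)
  obtain ⟨p, hpU, hprank⟩ := exists_rightRank_eq (w := w) hs0 hs
  have hagree : ∀ j < p, wT w s j = w j := fun j hj => by
    rw [wT_apply, if_neg]
    rintro ⟨hjU, hjs⟩
    have := strictAntiOn_rightRank hjU hpU hj
    omega
  have hbound := hL.val_add_le hagree (eq_true_of_mem_unmatchedPos hmaj hpU)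
    (by rw [wT_apply, if_pos ⟨hpU, hprank.le⟩]) (hd ▸ isLyndon_lyndonOf _)
  refine ⟨d, hd, fun k hk => ?_⟩
  rw [middleUnmatched, Finset.mem_filter] at hk
  have := Fin.lt_def.1 ((strictAntiOn_rightRank.lt_iff_gt hpU hk.1).1 (by omega))
  omega

/-- The map `φ` proceeds from right to left through the initial Lyndon
word, successively turning the unmatched `1`s into `0`s: if `w` is a Lyndon word with
strictly more `1`s than `0`s and `m` unmatched positions, then for every `1 ≤ t ≤ m`
such that `w_{t−1}` still has strictly more `1`s than `0`s,
`φ(necklace of w_{t−1}) = necklace of w_t`. -/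
theorem phi_of_wT (n : ℕ) [NeZero n] (w : Word n)
    (hL : IsLyndon w) (hmaj : zeros w < wt w)
    (t : ℕ) (ht1 : 1 ≤ t) (ht2 : t ≤ (unmatchedPos w).card)
    (hupper : zeros (wT w (t - 1)) < wt (wT w (t - 1))) :
    phi (nec (wT w (t - 1))) = nec (wT w t) := by
  obtain ⟨s, rfl⟩ : ∃ s, t = s + 1 := ⟨t - 1, by omega⟩
  rw [Nat.add_sub_cancel] at hupper ⊢
  have hs : 2 * s < (unmatchedPos w).card := two_mul_lt_card_unmatchedPos hmaj (by omega) hupper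
  obtain ⟨q, hqU, hqrank⟩ := exists_rightRank_eq (w := w) (r := s + 1) le_add_self ht2
  have hqM : q ∈ middleUnmatched w s := Finset.mem_filter.2 ⟨hqU, by omega, by omega⟩
  obtain ⟨d, hd, hnowrap⟩ := exists_rot_eq_lyndonOf_wT hL hmaj (s := s) (by omega)
  have hU : unmatchedPos (lyndonOf (wT w s)) = (middleUnmatched w s).image (· + d) := by
    rw [← hd, unmatchedPos_rot, unmatchedPos_wT hmaj hs.le]
  have htop : flipTop (lyndonOf (wT w s)) = rot d (Function.update (wT w s) q false) := by
    rw [flipTop_eq_update (q := q + d) (hU ▸ Finset.mem_image_of_mem _ hqM), ← hd, update_rot]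
    rw [hU]
    intro x hx
    obtain ⟨k, hk, rfl⟩ := Finset.mem_image.1 hx
    exact Fin.add_le_add_right_of_val_add_lt (le_of_mem_middleUnmatched hqU hqrank hk)
      (hnowrap q hqM)
  rw [phi_nec, htop, nec_rot, wT_succ hqU hqrank]
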